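/- arXiv:1509.08748 — 4 statements merged into one kernel-verified Lean document; each statement's English description precedes it below -/
import Mathlib

section
/- Let P = (x, y) be an affine point of E(K) with 2P ≠ O. Then δ₂(x, 1) ≠ 0, the point 2P is again affine, and its x-coordinate equals δ₁(x, 1)/δ₂(x, 1). -/
/-!
On the curve, `δ₂(x, 1)` is the square of `ψ₂ = 2y + a₁x + a₃ = y - negY x y`, which vanishes exactly
when `P = -P`. Otherwise the tangent slope is `ℓ = (3x² + 2a₂x + a₄ - a₁y) / ψ₂`, and clearing the
denominator `ψ₂²` in `x(2P) = ℓ² + a₁ℓ - a₂ - 2x` turns the numerator into `δ₁(x, 1)` modulo the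
Weierstrass equation.
-/

open WeierstrassCurve

/-- The first duplication polynomial `δ₁(x₁,x₂) = x₁⁴ − b₄x₁²x₂² − 2b₆x₁x₂³ − b₈x₂⁴`. -/
def delta1 {R : Type*} [CommRing R] (W : WeierstrassCurve R) (x₁ x₂ : R) : R :=
  x₁ ^ 4 - W.b₄ * x₁ ^ 2 * x₂ ^ 2 - 2 * W.b₆ * x₁ * x₂ ^ 3 - W.b₈ * x₂ ^ 4

/-- The second duplication polynomial `δ₂(x₁,x₂) = 4x₁³x₂ + b₂x₁²x₂² + 2b₄x₁x₂³ + b₆x₂⁴`. -/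
def delta2 {R : Type*} [CommRing R] (W : WeierstrassCurve R) (x₁ x₂ : R) : R :=
  4 * x₁ ^ 3 * x₂ + W.b₂ * x₁ ^ 2 * x₂ ^ 2 + 2 * W.b₄ * x₁ * x₂ ^ 3 + W.b₆ * x₂ ^ 4

namespace WeierstrassCurve.Affine

lemma delta2_eq_sub_negY_sq {R : Type*} [CommRing R] {W : Affine R} {x y : R}
    (h : W.Equation x y) : delta2 W x 1 = (y - W.negY x y) ^ 2 := by
  rw [equation_iff] at h
  simp only [delta2, negY, b₂, b₄, b₆]
  linear_combination -4 * h

variable {F : Type*} [Field F] {W : Affine F} {x y : F}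

lemma delta2_ne_zero_of_Y_ne (h : W.Equation x y) (hy : y ≠ W.negY x y) :
    delta2 W x 1 ≠ 0 := by
  rw [delta2_eq_sub_negY_sq h]
  exact pow_ne_zero 2 (sub_ne_zero.mpr hy)

lemma addX_slope_self_eq_delta1_div_delta2 [DecidableEq F] (h : W.Equation x y)
    (hy : y ≠ W.negY x y) : W.addX x x (W.slope x x y y) = delta1 W x 1 / delta2 W x 1 := by
  rw [eq_div_iff (delta2_ne_zero_of_Y_ne h hy), delta2_eq_sub_negY_sq h, slope_of_Y_ne rfl hy,
    addX]
  rw [equation_iff] at h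
  field_simp
  simp only [delta1, negY, b₄, b₆, b₈]
  linear_combination (-4 * W.a₂ - W.a₁ ^ 2 - 8 * x) * h

lemma Y_ne_negY_of_two_smul_ne_zero [DecidableEq F] {h : W.Nonsingular x y}
    (h2 : 2 • (Point.some x y h : W.Point) ≠ 0) : y ≠ W.negY x y := fun hy =>
  h2 (by rw [two_smul]; exact Point.add_self_of_Y_eq hy)

end WeierstrassCurve.Affine

open Classical in
theorem statement0_general {K : Type*} [Field K] (W : Affine K)
    {x y : K} (h : W.Nonsingular x y)
    (h2 : 2 • (Affine.Point.some x y h : W.Point) ≠ 0) :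
    delta2 W x 1 ≠ 0 ∧
    ∃ (x' y' : K) (h' : W.Nonsingular x' y'),
      2 • (Affine.Point.some x y h : W.Point) = Affine.Point.some x' y' h' ∧
      x' = delta1 W x 1 / delta2 W x 1 := by
  have hy := Affine.Y_ne_negY_of_two_smul_ne_zero h2
  exact ⟨Affine.delta2_ne_zero_of_Y_ne h.1 hy, _, _, _,
    (two_smul ℕ _).trans (Affine.Point.add_self_of_Y_ne hy),
    Affine.addX_slope_self_eq_delta1_div_delta2 h.1 hy⟩

open Classical in
theorem statement0 {K : Type*} [Field K] (W : Affine K) (hΔ : W.Δ ≠ 0)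
    {x y : K} (h : W.Nonsingular x y)
    (h2 : 2 • (Affine.Point.some x y h : W.Point) ≠ 0) :
    delta2 W x 1 ≠ 0 ∧
    ∃ (x' y' : K) (h' : W.Nonsingular x' y'),
      2 • (Affine.Point.some x y h : W.Point) = Affine.Point.some x' y' h' ∧
      x' = delta1 W x 1 / delta2 W x 1 :=
  statement0_general W h h2
end

section
/- Let P ∈ E(ℚ_p) and let B ≥ 1 and M ≥ 2 be integers such that (1) there exists an integer M′ with 0 < M′ ≤ M and M′·μ(P) ∈ ℤ, and (2) ε(Q) ≤ B for every Q ∈ E(ℚ_p). Set m = ⌊log(BM²/3)/log 4⌋ and μ₀ = Σ_{n=0}^{m} 4^{−n−1} ε(2ⁿP). Then μ(P) is the unique rational number with denominator at most M lying in the interval [μ₀, μ₀ + 1/M²]. -/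
/-!
With integral coefficients, every point has Kummer coordinates `(x₁, x₂)` with
`min{v(x₁), v(x₂)} = 0` (namely `(1, 0)`, `(x, 1)` or `(1, 1/x)`), and these make `δ₁, δ₂`
integral, so `0 ≤ ε ≤ B`. The terms of `μ` beyond `n = m` then sum to at most
`B / (3·4^(m+1)) < 1 / M²` by the choice of `m`, so `μ ∈ [μ₀, μ₀ + 1/M²]`. Two distinct
fractions with denominators at most `M` differ by at least `1 / lcm` of their denominators,
and this exceeds `1 / M²` because `M ≥ 2`; hence `μ = k / M'` is the only such fraction there.
-/

open WeierstrassCurve Classical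

variable {p : ℕ} [Fact p.Prime]

/-- `min{v(x₁), v(x₂)}`, where terms with argument `0` are omitted from the minimum.
(This is only meaningful for `(x₁, x₂) ≠ (0, 0)`.) -/
noncomputable def vmin (x₁ x₂ : ℚ_[p]) : ℤ :=
  if x₁ = 0 then x₂.valuation
  else if x₂ = 0 then x₁.valuation
  else min x₁.valuation x₂.valuation

/-- The canonical pair of Kummer coordinates of a point `P`: `(1, 0)` if `P = O`, and
`(x(P), 1)` if `P` is affine.  (Any pair of Kummer coordinates for `P` is a nonzero
scalar multiple of this pair, and `ε` is independent of this choice.) -/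
noncomputable def kummer {W : Affine ℚ_[p]} : W.Point → ℚ_[p] × ℚ_[p]
  | .zero => (1, 0)
  | @Affine.Point.some _ _ _ x _ _ => (x, 1)

/-- The local error function
`ε(P) = min{v(δ₁(x₁,x₂)), v(δ₂(x₁,x₂))} − 4·min{v(x₁), v(x₂)}`,
computed on the canonical pair of Kummer coordinates of `P`. -/
noncomputable def eps (W : Affine ℚ_[p]) (P : W.Point) : ℤ :=
  vmin (delta1 W (kummer P).1 (kummer P).2) (delta2 W (kummer P).1 (kummer P).2)
    - 4 * vmin (kummer P).1 (kummer P).2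

/-- The local height correction function `μ(P) = Σ_{n=0}^∞ 4^{−n−1} ε(2ⁿP)`. -/
noncomputable def mu (W : Affine ℚ_[p]) (P : W.Point) : ℝ :=
  ∑' n : ℕ, (eps W ((2 ^ n : ℕ) • P) : ℝ) / 4 ^ (n + 1)

/-- The partial sum `μ₀ = Σ_{n=0}^{m} 4^{−n−1} ε(2ⁿP)`. -/
noncomputable def mu0 (W : Affine ℚ_[p]) (P : W.Point) (m : ℕ) : ℝ :=
  ∑ n ∈ Finset.range (m + 1), (eps W ((2 ^ n : ℕ) • P) : ℝ) / 4 ^ (n + 1)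

def HasIntegralCoeffs (W : WeierstrassCurve ℚ_[p]) : Prop :=
  ‖W.a₁‖ ≤ 1 ∧ ‖W.a₂‖ ≤ 1 ∧ ‖W.a₃‖ ≤ 1 ∧ ‖W.a₄‖ ≤ 1 ∧ ‖W.a₆‖ ≤ 1

section DuplicationPolynomials

variable {R : Type*} [CommRing R] (W : WeierstrassCurve R)

lemma delta1_mul (c x₁ x₂ : R) : delta1 W (c * x₁) (c * x₂) = c ^ 4 * delta1 W x₁ x₂ := by
  unfold delta1; ring

lemma delta2_mul (c x₁ x₂ : R) : delta2 W (c * x₁) (c * x₂) = c ^ 4 * delta2 W x₁ x₂ := by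
  unfold delta2; ring

end DuplicationPolynomials

lemma vmin_nonneg {a b : ℚ_[p]} (ha : ‖a‖ ≤ 1) (hb : ‖b‖ ≤ 1) : 0 ≤ vmin a b := by
  rw [Padic.norm_le_one_iff_val_nonneg] at ha hb
  unfold vmin
  split_ifs <;> omega

lemma vmin_one_right {a : ℚ_[p]} (ha : ‖a‖ ≤ 1) : vmin a 1 = 0 := by
  rw [Padic.norm_le_one_iff_val_nonneg] at ha
  unfold vmin
  split_ifs <;> simp_all

lemma vmin_one_left {b : ℚ_[p]} (hb : ‖b‖ ≤ 1) : vmin 1 b = 0 := by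
  rw [Padic.norm_le_one_iff_val_nonneg] at hb
  unfold vmin
  split_ifs <;> simp_all

lemma vmin_mul {c a b : ℚ_[p]} (hc : c ≠ 0) (ha : a ≠ 0) :
    vmin (c * a) (c * b) = c.valuation + vmin a b := by
  unfold vmin
  rcases eq_or_ne b 0 with rfl | hb
  · simp [ha, hc, Padic.valuation_mul hc ha]
  · simp [ha, hb, hc, Padic.valuation_mul hc ha, Padic.valuation_mul hc hb, min_add_add_left]

section LocalError

variable {W : WeierstrassCurve ℚ_[p]}

lemma norm_delta_le_one (hW : HasIntegralCoeffs W) {x₁ x₂ : ℚ_[p]} (hx₁ : ‖x₁‖ ≤ 1)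
    (hx₂ : ‖x₂‖ ≤ 1) : ‖delta1 W x₁ x₂‖ ≤ 1 ∧ ‖delta2 W x₁ x₂‖ ≤ 1 := by
  obtain ⟨h₁, h₂, h₃, h₄, h₆⟩ := hW
  simp only [← PadicInt.mem_subring_iff, delta1, delta2, b₂, b₄, b₆, b₈] at *
  constructor <;>
    repeat
      first
      | assumption
      | exact ofNat_mem _ _
      | apply add_mem
      | apply sub_mem
      | apply mul_mem
      | apply pow_mem

lemma delta1_one_ne_zero (hW : HasIntegralCoeffs W) {t : ℚ_[p]} (ht : ‖t‖ < 1) :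
    delta1 W 1 t ≠ 0 := by
  obtain ⟨h₁, h₂, h₃, h₄, h₆⟩ := hW
  have hc : ‖W.b₄ * t + 2 * W.b₆ * t ^ 2 + W.b₈ * t ^ 3‖ ≤ 1 := by
    simp only [← PadicInt.mem_subring_iff, b₄, b₆, b₈] at *
    repeat
      first
      | exact ht.le
      | assumption
      | exact ofNat_mem _ _
      | apply add_mem
      | apply sub_mem
      | apply mul_mem
      | apply pow_mem
  intro h
  have h1 : (1 : ℚ_[p]) = t * (W.b₄ * t + 2 * W.b₆ * t ^ 2 + W.b₈ * t ^ 3) := by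
    unfold delta1 at h; linear_combination h
  have := congrArg norm h1
  rw [norm_one, norm_mul] at this
  nlinarith [norm_nonneg t, norm_nonneg (W.b₄ * t + 2 * W.b₆ * t ^ 2 + W.b₈ * t ^ 3)]

noncomputable def epsPair (W : WeierstrassCurve ℚ_[p]) (x₁ x₂ : ℚ_[p]) : ℤ :=
  vmin (delta1 W x₁ x₂) (delta2 W x₁ x₂) - 4 * vmin x₁ x₂

lemma epsPair_mul {c x₁ x₂ : ℚ_[p]} (hc : c ≠ 0) (hx₁ : x₁ ≠ 0) (hδ : delta1 W x₁ x₂ ≠ 0) :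
    epsPair W (c * x₁) (c * x₂) = epsPair W x₁ x₂ := by
  rw [epsPair, epsPair, delta1_mul, delta2_mul, vmin_mul (pow_ne_zero 4 hc) hδ, vmin_mul hc hx₁,
    Padic.valuation_pow]
  push_cast
  ring

lemma epsPair_nonneg (hW : HasIntegralCoeffs W) {x₁ x₂ : ℚ_[p]} (hx₁ : ‖x₁‖ ≤ 1)
    (hx₂ : ‖x₂‖ ≤ 1) (hprim : vmin x₁ x₂ = 0) : 0 ≤ epsPair W x₁ x₂ := by
  obtain ⟨hδ₁, hδ₂⟩ := norm_delta_le_one hW hx₁ hx₂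
  rw [epsPair, hprim]
  linarith [vmin_nonneg hδ₁ hδ₂]

theorem eps_nonneg {W : Affine ℚ_[p]} (hW : HasIntegralCoeffs W) (P : W.Point) :
    0 ≤ eps W P := by
  cases P with
  | zero =>
    change 0 ≤ epsPair W 1 0
    exact epsPair_nonneg hW norm_one.le (by simp) (vmin_one_left (by simp))
  | some x y h =>
    change 0 ≤ epsPair W x 1
    rcases le_or_gt ‖x‖ 1 with hx | hx
    · exact epsPair_nonneg hW hx norm_one.le (vmin_one_right hx)
    · have hx₀ : x ≠ 0 := by
        rintro rfl
        norm_num at hx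
      have ht : ‖x⁻¹‖ < 1 := by
        rw [norm_inv]
        exact inv_lt_one_of_one_lt₀ hx
      have hscale := epsPair_mul hx₀ one_ne_zero (delta1_one_ne_zero hW ht)
      rw [mul_one, mul_inv_cancel₀ hx₀] at hscale
      rw [hscale]
      exact epsPair_nonneg hW norm_one.le ht.le (vmin_one_left ht.le)

end LocalError

section Series

lemma hasSum_div_four_pow_add (B : ℝ) (k : ℕ) :
    HasSum (fun n : ℕ => B / 4 ^ (n + k + 1)) (B / (3 * 4 ^ k)) := by
  have hterm : (fun n : ℕ => B / 4 ^ (n + k + 1)) = fun n => B / 4 ^ (k + 1) * (4 : ℝ)⁻¹ ^ n := by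
    ext n
    rw [inv_pow, add_right_comm, pow_add]
    field_simp
    ring
  have hvalue : B / (3 * 4 ^ k) = B / 4 ^ (k + 1) * (1 - (4 : ℝ)⁻¹)⁻¹ := by
    rw [pow_succ]
    field_simp
    norm_num
  rw [hterm, hvalue]
  exact (hasSum_geometric_of_lt_one (by norm_num) (by norm_num)).mul_left _

variable {a : ℕ → ℝ} {B : ℝ}

lemma summable_div_four_pow (h0 : ∀ n, 0 ≤ a n) (hB : ∀ n, a n ≤ B) :
    Summable fun n => a n / 4 ^ (n + 1) :=
  Summable.of_nonneg_of_le (fun n => div_nonneg (h0 n) (by positivity))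
    (fun n => div_le_div_of_nonneg_right (hB n) (by positivity))
    (hasSum_div_four_pow_add B 0).summable

lemma tsum_div_four_pow_le_sum_range_add (h0 : ∀ n, 0 ≤ a n) (hB : ∀ n, a n ≤ B) (k : ℕ) :
    ∑' n, a n / 4 ^ (n + 1) ≤ ∑ n ∈ Finset.range k, a n / 4 ^ (n + 1) + B / (3 * 4 ^ k) := by
  have hsum := summable_div_four_pow h0 hB
  have htail : ∑' n, a (n + k) / 4 ^ (n + k + 1) ≤ B / (3 * 4 ^ k) :=
    hasSum_le (fun n => div_le_div_of_nonneg_right (hB _) (by positivity))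
      ((summable_nat_add_iff k).mpr hsum).hasSum (hasSum_div_four_pow_add B k)
  rw [← hsum.sum_add_tsum_nat_add k]
  gcongr

end Series

lemma lt_four_pow_of_floor_log_div_log_four {x : ℝ} (hx : 0 ≤ x) {m : ℕ}
    (hm : (m : ℤ) = ⌊Real.log x / Real.log 4⌋) : x < 4 ^ (m + 1) := by
  rw [Real.log_div_log, show (4 : ℝ) = (4 : ℕ) by norm_num, Real.floor_logb_natCast hx] at hm
  have := Int.lt_zpow_succ_log_self (by norm_num : 1 < 4) x
  rwa [← hm, ← Nat.cast_succ, zpow_natCast] at this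

lemma Nat.lcm_lt_sq {a b M : ℕ} (hM : 2 ≤ M) (ha : a ≤ M) (hb : b ≤ M) : a.lcm b < M ^ 2 := by
  rcases eq_or_ne a b with rfl | hab
  · rw [Nat.lcm_self]
    nlinarith
  rcases Nat.eq_zero_or_pos (a * b) with h | h
  · rcases mul_eq_zero.mp h with rfl | rfl <;> simp <;> positivity
  · have := Nat.le_of_dvd h (Nat.lcm_dvd_mul a b)
    rcases hab.lt_or_gt with hlt | hlt <;> nlinarith

lemma Rat.inv_den_le_abs {r : ℚ} (hr : r ≠ 0) : (r.den : ℚ)⁻¹ ≤ |r| := by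
  rw [Rat.abs_def, Rat.divInt_eq_div, inv_eq_one_div]
  gcongr
  · exact_mod_cast Int.natAbs_pos.mpr (Rat.num_ne_zero.mpr hr)
  · simp

lemma Rat.eq_of_den_le_of_mem_Icc {M : ℕ} (hM : 2 ≤ M) {q q' : ℚ} (hq : q.den ≤ M)
    (hq' : q'.den ≤ M) {a : ℝ} (hqa : (q : ℝ) ∈ Set.Icc a (a + 1 / M ^ 2))
    (hq'a : (q' : ℝ) ∈ Set.Icc a (a + 1 / M ^ 2)) : q = q' := by
  by_contra hne
  have hden : (q - q').den < M ^ 2 :=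
    (Nat.le_of_dvd (Nat.lcm_pos q.pos q'.pos) (Rat.sub_den_dvd_lcm q q')).trans_lt
      (Nat.lcm_lt_sq hM hq hq')
  have hfar : (1 / M ^ 2 : ℚ) < |q - q'| := by
    refine lt_of_lt_of_le ?_ (Rat.inv_den_le_abs (sub_ne_zero.mpr hne))
    rw [one_div]
    gcongr
    exact_mod_cast hden
  have hnear : |(q : ℝ) - q'| ≤ 1 / M ^ 2 := by
    rw [abs_sub_le_iff]
    constructor <;> linarith [hqa.1, hqa.2, hq'a.1, hq'a.2]
  have : ((1 / M ^ 2 : ℚ) : ℝ) < ((|q - q'| : ℚ) : ℝ) := by exact_mod_cast hfar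
  push_cast at this
  linarith

lemma exists_rat_eq_of_natCast_mul_eq_intCast {x : ℝ} {N : ℕ} (hN : 0 < N) {k : ℤ}
    (hk : (N : ℝ) * x = k) : ∃ q : ℚ, (q : ℝ) = x ∧ q.den ≤ N := by
  refine ⟨Rat.divInt k N, ?_, ?_⟩
  · rw [Rat.divInt_eq_div]
    push_cast
    rw [div_eq_iff (by positivity), ← hk, mul_comm]
  · exact Nat.le_of_dvd hN (Int.natCast_dvd_natCast.mp (Rat.den_dvd k N))

theorem statement3_general (W : Affine ℚ_[p])
    (hint : ‖W.a₁‖ ≤ 1 ∧ ‖W.a₂‖ ≤ 1 ∧ ‖W.a₃‖ ≤ 1 ∧ ‖W.a₄‖ ≤ 1 ∧ ‖W.a₆‖ ≤ 1)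
    (P : W.Point)
    (B M : ℕ) (hM : 2 ≤ M)
    (h1 : ∃ M' : ℕ, 0 < M' ∧ M' ≤ M ∧ ∃ k : ℤ, (M' : ℝ) * mu W P = (k : ℝ))
    (h2 : ∀ Q : W.Point, eps W Q ≤ (B : ℤ))
    (m : ℕ) (hm : (m : ℤ) = ⌊Real.log (B * M ^ 2 / 3) / Real.log 4⌋) :
    ∃ q : ℚ, (q : ℝ) = mu W P ∧ q.den ≤ M ∧
      mu0 W P m ≤ (q : ℝ) ∧ (q : ℝ) ≤ mu0 W P m + 1 / (M : ℝ) ^ 2 ∧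
      ∀ q' : ℚ, q'.den ≤ M → mu0 W P m ≤ (q' : ℝ) →
        (q' : ℝ) ≤ mu0 W P m + 1 / (M : ℝ) ^ 2 → q' = q := by
  have hε₀ (n : ℕ) : (0 : ℝ) ≤ eps W ((2 ^ n : ℕ) • P) := by exact_mod_cast eps_nonneg hint _
  have hεB (n : ℕ) : (eps W ((2 ^ n : ℕ) • P) : ℝ) ≤ B := by exact_mod_cast h2 _
  have hlo : mu0 W P m ≤ mu W P :=
    (summable_div_four_pow hε₀ hεB).sum_le_tsum _ fun n _ => div_nonneg (hε₀ n) (by positivity)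
  have hhi : mu W P ≤ mu0 W P m + 1 / (M : ℝ) ^ 2 := by
    have hpow := lt_four_pow_of_floor_log_div_log_four (by positivity) hm
    have hM₀ : (0 : ℝ) < M := by exact_mod_cast (by omega : 0 < M)
    calc mu W P ≤ mu0 W P m + B / (3 * 4 ^ (m + 1)) :=
          tsum_div_four_pow_le_sum_range_add hε₀ hεB (m + 1)
      _ ≤ mu0 W P m + 1 / (M : ℝ) ^ 2 := by
          rw [add_le_add_iff_left, div_le_div_iff₀ (by positivity) (by positivity)]
          linarith
  obtain ⟨M', hM'₀, hM'M, k, hk⟩ := h1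
  obtain ⟨q, hq, hqM'⟩ := exists_rat_eq_of_natCast_mul_eq_intCast hM'₀ hk
  rw [← hq] at hlo hhi
  exact ⟨q, hq, hqM'.trans hM'M, hlo, hhi, fun q' hq'M hlo' hhi' =>
    Rat.eq_of_den_le_of_mem_Icc hM hq'M (hqM'.trans hM'M) ⟨hlo', hhi'⟩ ⟨hlo, hhi⟩⟩

/-- Lemma: computing `μ(P)` from finitely many `ε(2ⁿP)`. -/
theorem statement3 (W : Affine ℚ_[p]) (hΔ : W.Δ ≠ 0)
    (hint : ‖W.a₁‖ ≤ 1 ∧ ‖W.a₂‖ ≤ 1 ∧ ‖W.a₃‖ ≤ 1 ∧ ‖W.a₄‖ ≤ 1 ∧ ‖W.a₆‖ ≤ 1)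
    (P : W.Point)
    (B M : ℕ) (hB : 1 ≤ B) (hM : 2 ≤ M)
    (h1 : ∃ M' : ℕ, 0 < M' ∧ M' ≤ M ∧ ∃ k : ℤ, (M' : ℝ) * mu W P = (k : ℝ))
    (h2 : ∀ Q : W.Point, eps W Q ≤ (B : ℤ))
    (m : ℕ) (hm : (m : ℤ) = ⌊Real.log (B * M ^ 2 / 3) / Real.log 4⌋) :
    ∃ q : ℚ, (q : ℝ) = mu W P ∧ q.den ≤ M ∧
      mu0 W P m ≤ (q : ℝ) ∧ (q : ℝ) ≤ mu0 W P m + 1 / (M : ℝ) ^ 2 ∧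
      ∀ q' : ℚ, q'.den ≤ M → mu0 W P m ≤ (q' : ℝ) →
        (q' : ℝ) ≤ mu0 W P m + 1 / (M : ℝ) ^ 2 → q' = q :=
  statement3_general W hint P B M hM h1 h2 m hm
end

section
/- Let a, b, x be real numbers with 0 < b < a and x > 0, and set a′ = (a+b)/2 and x′ = (x − ab + √((x+a²)(x+b²)))/2. Then x′ > 0, one has the identity x′ + a′² = (x + (a²+b²)/2 + √((x+a²)(x+b²)))/2, and the quantity s = 1 − (x′ + a′²)/(x + a²) satisfies 0 < s < 1 and s ≤ (1/2)·√((a² − b²)/(x + a²)) + (1/4)·(a² − b²)/(x + a²). -/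
/-!
With `u = √(x + a²)` and `v = √(x + b²)` one has `√((x + a²)(x + b²)) = uv`, and the AGM
step becomes `x′ + a′² = ((u + v)/2)²`.  Hence, for `t = v/u ∈ (0, 1)`,
`s = 1 - ((1 + t)/2)² = (1 - t)/2 + (1 - t²)/4` while `(a² - b²)/(x + a²) = 1 - t²`,
and the bound on `s` is `1 - t ≤ √(1 - t²)`.
-/

open Real

lemma lt_sqrt_add_sq {x : ℝ} (hx : 0 < x) (a : ℝ) : a < √(x + a ^ 2) :=
  calc a ≤ |a| := le_abs_self a
    _ = √(a ^ 2) := (sqrt_sq_eq_abs a).symm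
    _ < √(x + a ^ 2) := sqrt_lt_sqrt (sq_nonneg a) (by linarith)

lemma agm_step_add_sq {x a b u v : ℝ} (hu : u ^ 2 = x + a ^ 2) (hv : v ^ 2 = x + b ^ 2) :
    (x - a * b + u * v) / 2 + ((a + b) / 2) ^ 2 = ((u + v) / 2) ^ 2 := by
  linear_combination -(hu + hv) / 4

lemma one_sub_sq_half_one_add (t : ℝ) :
    1 - ((1 + t) / 2) ^ 2 = 1 / 2 * (1 - t) + 1 / 4 * (1 - t ^ 2) := by
  ring

lemma one_sub_le_sqrt_one_sub_sq {t : ℝ} (h0 : 0 ≤ t) (h1 : t ≤ 1) : 1 - t ≤ √(1 - t ^ 2) :=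
  le_sqrt_of_sq_le (by nlinarith)

theorem statement13 (a b x : ℝ) (hb : 0 < b) (hba : b < a) (hx : 0 < x)
    (a' x' s : ℝ) (ha' : a' = (a + b) / 2)
    (hx' : x' = (x - a * b + Real.sqrt ((x + a ^ 2) * (x + b ^ 2))) / 2)
    (hs : s = 1 - (x' + a' ^ 2) / (x + a ^ 2)) :
    0 < x' ∧
    x' + a' ^ 2 = (x + (a ^ 2 + b ^ 2) / 2 + Real.sqrt ((x + a ^ 2) * (x + b ^ 2))) / 2 ∧
    0 < s ∧ s < 1 ∧
    s ≤ 1 / 2 * Real.sqrt ((a ^ 2 - b ^ 2) / (x + a ^ 2)) +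
      1 / 4 * ((a ^ 2 - b ^ 2) / (x + a ^ 2)) := by
  have ha : 0 < a := hb.trans hba
  set u := √(x + a ^ 2)
  set v := √(x + b ^ 2)
  have hu2 : u ^ 2 = x + a ^ 2 := sq_sqrt (by positivity)
  have hv2 : v ^ 2 = x + b ^ 2 := sq_sqrt (by positivity)
  have hu : 0 < u := sqrt_pos.mpr (by positivity)
  have hv : 0 < v := sqrt_pos.mpr (by positivity)
  have hvu : v < u := sqrt_lt_sqrt (by positivity) (by nlinarith)
  have hr : √((x + a ^ 2) * (x + b ^ 2)) = u * v := sqrt_mul (by positivity) _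
  have hsum : x' + a' ^ 2 = ((u + v) / 2) ^ 2 := by
    rw [hx', ha', hr]
    exact agm_step_add_sq hu2 hv2
  set t := v / u with ht
  have ht0 : 0 < t := div_pos hv hu
  have ht1 : t < 1 := (div_lt_one hu).mpr hvu
  have hs_t : s = 1 - ((1 + t) / 2) ^ 2 := by
    rw [hs, hsum, ← hu2, ht]
    field_simp
  have hd_t : (a ^ 2 - b ^ 2) / (x + a ^ 2) = 1 - t ^ 2 := by
    rw [← hu2, ht, div_pow, eq_sub_iff_add_eq, ← add_div, div_eq_one_iff_eq (by positivity)]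
    linarith
  refine ⟨?_, by rw [hx', ha']; ring, by nlinarith, by nlinarith, ?_⟩
  · have hab : a * b < u * v :=
      mul_lt_mul'' (lt_sqrt_add_sq hx a) (lt_sqrt_add_sq hx b) ha.le hb.le
    rw [hx', hr]
    linarith
  · rw [hs_t, hd_t, one_sub_sq_half_one_add]
    gcongr
    exact one_sub_le_sqrt_one_sub_sq ht0.le ht1.le
end

section
/- Let a be a real number and B ≥ 1 an integer. Then there is at most one rational number r/s in lowest terms with 1 ≤ s ≤ B² satisfying a ≤ r/s ≤ a + 1/(2sB²); that is, if r/s and r′/s′ are both in lowest terms with 1 ≤ s, s′ ≤ B², a ≤ r/s ≤ a + 1/(2sB²) and a ≤ r′/s′ ≤ a + 1/(2s′B²), then r/s = r′/s′. -/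
/-!
Two distinct fractions `r/s`, `r'/s'` differ by at least `1/(s s')`, since `r s' - r' s` is a
nonzero integer. If both lie in `[a, a + 1/(2sB²)]` and `[a, a + 1/(2s'B²)]` respectively, the
larger one, say `r/s`, exceeds the smaller by at most `1/(2sB²)`, forcing `s' ≥ 2B²`.
-/

section

variable {K : Type*} [Field K] [LinearOrder K] [IsStrictOrderedRing K]

lemma one_div_mul_le_div_sub_div_of_lt {r s r' s' : ℤ} (hs : 0 < s) (hs' : 0 < s')
    (hlt : (r' : K) / s' < r / s) : 1 / ((s : K) * s') ≤ r / s - r' / s' := by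
  have hsK : (0 : K) < s := by exact_mod_cast hs
  have hsK' : (0 : K) < s' := by exact_mod_cast hs'
  have hsub : (r : K) / s - r' / s' = ((r * s' - r' * s : ℤ) : K) / (s * s') := by
    push_cast
    field_simp
  have hnum : 1 ≤ r * s' - r' * s := by
    rw [div_lt_div_iff₀ hsK' hsK] at hlt
    have : r' * s < r * s' := by exact_mod_cast hlt
    omega
  rw [hsub]
  gcongr
  exact_mod_cast hnum

lemma div_le_div_of_mem_window {a N : K} {r s r' s' : ℤ} (hs : 0 < s) (hs' : 0 < s')
    (hs'N : (s' : K) ≤ N) (hlow : a ≤ r' / s') (hup : (r : K) / s ≤ a + 1 / (2 * s * N)) :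
    (r : K) / s ≤ r' / s' := by
  by_contra! hlt
  have hsK : (0 : K) < s := by exact_mod_cast hs
  have hs'K : (1 : K) ≤ s' := by exact_mod_cast hs'
  have hN : 0 < N := by linarith
  have hgap : 1 / ((s : K) * s') ≤ 1 / (2 * s * N) := by
    linarith [one_div_mul_le_div_sub_div_of_lt (K := K) hs hs' hlt]
  rw [one_div_le_one_div (by positivity) (by positivity)] at hgap
  nlinarith

end

theorem statement16_general (a : ℝ) (B : ℤ) (r s r' s' : ℤ)
    (hs1 : 1 ≤ s) (hsB : s ≤ B ^ 2)
    (hs1' : 1 ≤ s') (hsB' : s' ≤ B ^ 2)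
    (h1 : a ≤ (r : ℝ) / s) (h2 : (r : ℝ) / s ≤ a + 1 / (2 * s * B ^ 2))
    (h1' : a ≤ (r' : ℝ) / s') (h2' : (r' : ℝ) / s' ≤ a + 1 / (2 * s' * B ^ 2)) :
    (r : ℝ) / s = (r' : ℝ) / s' := by
  have hsB_real : (s : ℝ) ≤ (B : ℝ) ^ 2 := by exact_mod_cast hsB
  have hsB'_real : (s' : ℝ) ≤ (B : ℝ) ^ 2 := by exact_mod_cast hsB'
  exact le_antisymm (div_le_div_of_mem_window hs1 hs1' hsB'_real h1' h2)
    (div_le_div_of_mem_window hs1' hs1 hsB_real h1 h2')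

theorem statement16 (a : ℝ) (B : ℤ) (hB : 1 ≤ B) (r s r' s' : ℤ)
    (hs1 : 1 ≤ s) (hsB : s ≤ B ^ 2) (hcop : IsCoprime r s)
    (hs1' : 1 ≤ s') (hsB' : s' ≤ B ^ 2) (hcop' : IsCoprime r' s')
    (h1 : a ≤ (r : ℝ) / s) (h2 : (r : ℝ) / s ≤ a + 1 / (2 * s * B ^ 2))
    (h1' : a ≤ (r' : ℝ) / s') (h2' : (r' : ℝ) / s' ≤ a + 1 / (2 * s' * B ^ 2)) :
    (r : ℝ) / s = (r' : ℝ) / s' :=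
  statement16_general a B r s r' s' hs1 hsB hs1' hsB' h1 h2 h1' h2'
end
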